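/- Let 1 ≤ k < ℓ ≤ m ≤ n, let U be an m-dimensional subspace of ℝ^n defined over ℚ, and let (y_1,…,y_m) be a basis of U ∩ ℤ^n. Set V_1 = span(y_1,…,ŷ_ℓ,…,y_m) and V_2 = span(y_1,…,ŷ_k,…,y_m) (hats denote omission). Then dist(V_1,V_2) = H(V_1 ∩ V_2)·H(U)/(H(V_1)·H(V_2)). -/

import Mathlib

open scoped RealInnerProductSpace
open Finset

noncomputable section

/-- A vector of `ℝⁿ` has integer coordinates (i.e. lies in `ℤⁿ`). -/
def IsIntVec {n : ℕ} (x : EuclideanSpace ℝ (Fin n)) : Prop := ∀ j, ∃ m : ℤ, x j = m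

/-- The distance `dist(x,V) = ‖proj_{V^⊥} x‖ / ‖x‖`. -/
def distToSub {n : ℕ} (x : EuclideanSpace ℝ (Fin n))
    (V : Submodule ℝ (EuclideanSpace ℝ (Fin n))) : ℝ :=
  ‖(Submodule.orthogonalProjectionOnto Vᗮ x : EuclideanSpace ℝ (Fin n))‖ / ‖x‖

/-- The distance `dist(V₁,V₂) = sup {dist(v,V₂) : v ∈ V₁, v ≠ 0}`. -/
def distSub {n : ℕ} (V₁ V₂ : Submodule ℝ (EuclideanSpace ℝ (Fin n))) : ℝ :=
  sSup {d : ℝ | ∃ v ∈ V₁, v ≠ 0 ∧ d = distToSub v V₂}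

/-- The norm of the wedge of the subfamily of `y` indexed by `s` (square root
of the Gram determinant); for a `ℤ`-basis this is the Schmidt height of the
spanned rational subspace. -/
def heightOn {n m : ℕ} (y : Fin m → EuclideanSpace ℝ (Fin n))
    (s : Finset (Fin m)) : ℝ :=
  Real.sqrt (Matrix.det (Matrix.of fun (i j : ↥s) => (⟪y i, y j⟫ : ℝ)))

lemma orthogonalProjection_orthogonal_val {n : ℕ}
    (K : Submodule ℝ (EuclideanSpace ℝ (Fin n))) (u : EuclideanSpace ℝ (Fin n)) :
    (Submodule.orthogonalProjectionOnto Kᗮ u : EuclideanSpace ℝ (Fin n))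
      = u - (Submodule.orthogonalProjectionOnto K u : EuclideanSpace ℝ (Fin n)) := by
  have h := Submodule.starProjection_orthogonal_val (K := K) u
  rw [Submodule.starProjection_apply, Submodule.starProjection_apply] at h
  exact h

lemma gram_det_option {n : ℕ} {ι : Type*} [Fintype ι] [DecidableEq ι]
    (z : ι → EuclideanSpace ℝ (Fin n)) (x : EuclideanSpace ℝ (Fin n)) :
    Matrix.det (Matrix.of fun i j : Option ι =>
        (⟪Option.elim i x z, Option.elim j x z⟫ : ℝ))
      = Matrix.det (Matrix.of fun i j : ι => (⟪z i, z j⟫ : ℝ))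
        * ‖(Submodule.orthogonalProjectionOnto (Submodule.span ℝ (Set.range z))ᗮ x
            : EuclideanSpace ℝ (Fin n))‖ ^ 2 := by
  set W := Submodule.span ℝ (Set.range z) with hW
  set u : EuclideanSpace ℝ (Fin n) := (Submodule.orthogonalProjectionOnto Wᗮ x : EuclideanSpace ℝ (Fin n)) with hu
  have huW : u ∈ Wᗮ := SetLike.coe_mem _
  have huz : ∀ i, (⟪u, z i⟫ : ℝ) = 0 := fun i =>
    (Submodule.mem_orthogonal' W u).1 huW _ (Submodule.subset_span ⟨i, rfl⟩)
  have hzu : ∀ i, (⟪z i, u⟫ : ℝ) = 0 := fun i => by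
    rw [real_inner_comm]; exact huz i
  obtain ⟨c, hc⟩ := (Submodule.mem_span_range_iff_exists_fun ℝ).1
    (SetLike.coe_mem (Submodule.orthogonalProjectionOnto W x))
  have hx : x = u + ∑ i, c i • z i := by
    rw [hc, hu, orthogonalProjection_orthogonal_val]; abel
  have hu2 : u = x - ∑ i, c i • z i := by rw [hx]; abel
  set A : Matrix (Option ι) (Option ι) ℝ :=
    Matrix.of fun i j : Option ι => (⟪Option.elim i x z, Option.elim j x z⟫ : ℝ) with hA
  set B : Matrix (Option ι) (Option ι) ℝ :=
    Matrix.of fun i j : Option ι => (⟪Option.elim i u z, Option.elim j x z⟫ : ℝ) with hB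
  set D : Matrix (Option ι) (Option ι) ℝ :=
    Matrix.of fun i j : Option ι => (⟪Option.elim i u z, Option.elim j u z⟫ : ℝ) with hD
  have hsome : (none : Option ι) ∉ Finset.univ.image some := by simp
  have hinj : ∀ a ∈ Finset.univ, ∀ b ∈ Finset.univ, some a = some b → a = b :=
    fun a _ b _ h => Option.some_injective ι h
  have step1 : B.det = A.det := by
    have h := Matrix.det_updateRow_sum_aux A (j := (none : Option ι))
      (Finset.univ.image some) hsome (fun o => Option.elim o 0 (fun i => -(c i))) 1
    simp only [one_smul] at h
    rw [← h]
    congr 1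
    ext i j
    rcases i with _ | a
    · rw [Matrix.updateRow_self]
      simp only [Pi.add_apply, Finset.sum_apply, Pi.smul_apply, smul_eq_mul,
        Finset.sum_image hinj, Option.elim_some, Option.elim_none, hA, hB, Matrix.of_apply]
      rw [hu2, inner_sub_left, sum_inner, sub_eq_add_neg, ← Finset.sum_neg_distrib]
      congr 1
      refine Finset.sum_congr rfl fun a _ => ?_
      rw [real_inner_smul_left]; ring
    · rw [Matrix.updateRow_ne (by simp)]
      simp only [hA, hB, Matrix.of_apply, Option.elim_some]
  have step2 : D.transpose.det = B.transpose.det := by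
    have h := Matrix.det_updateRow_sum_aux B.transpose (j := (none : Option ι))
      (Finset.univ.image some) hsome (fun o => Option.elim o 0 (fun i => -(c i))) 1
    simp only [one_smul] at h
    rw [← h]
    congr 1
    ext i j
    rcases i with _ | a
    · rw [Matrix.updateRow_self]
      simp only [Pi.add_apply, Finset.sum_apply, Pi.smul_apply, smul_eq_mul,
        Finset.sum_image hinj, Option.elim_some, Option.elim_none,
        Matrix.transpose_apply, hB, hD, Matrix.of_apply]
      rw [hu2, inner_sub_right, inner_sum, sub_eq_add_neg, ← Finset.sum_neg_distrib]
      congr 1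
      refine Finset.sum_congr rfl fun a _ => ?_
      rw [real_inner_smul_right]; ring
    · rw [Matrix.updateRow_ne (by simp)]
      simp only [Matrix.transpose_apply, hB, hD, Matrix.of_apply, Option.elim_some]
  have hAD : A.det = D.det := by
    rw [← step1, ← Matrix.det_transpose B, ← step2, Matrix.det_transpose]
  rw [hAD]
  set ee : Option ι ≃ ι ⊕ Unit := Equiv.optionEquivSumPUnit ι with hee
  have hsub : D.submatrix (ee).symm (ee).symm
      = Matrix.fromBlocks
      (Matrix.of fun i j : ι => (⟪z i, z j⟫ : ℝ)) 0 0
      (Matrix.of fun _ _ : Unit => ‖u‖ ^ 2) := by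
    ext i j
    rcases i with a | a <;> rcases j with b | b <;>
        simp only [hee, Matrix.submatrix_apply, Equiv.optionEquivSumPUnit_symm_inl,
          Equiv.optionEquivSumPUnit_symm_inr, hD, Matrix.of_apply, Option.elim_some,
          Option.elim_none, Matrix.fromBlocks_apply₁₁, Matrix.fromBlocks_apply₁₂,
          Matrix.fromBlocks_apply₂₁, Matrix.fromBlocks_apply₂₂, Matrix.zero_apply] <;>
      first
        | rfl
        | exact hzu _
        | exact huz _
        | exact real_inner_self_eq_norm_sq _
  rw [← Matrix.det_submatrix_equiv_self (ee).symm D, hsub,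
    Matrix.det_fromBlocks_zero₂₁]
  congr 1
  rw [Matrix.det_unique]
  rfl

lemma gram_det_insert {n m : ℕ} (y : Fin m → EuclideanSpace ℝ (Fin n))
    {s : Finset (Fin m)} {i : Fin m} (h : i ∉ s) :
    Matrix.det (Matrix.of fun a b : ↥(insert i s) => (⟪y a, y b⟫ : ℝ))
      = Matrix.det (Matrix.of fun a b : ↥s => (⟪y a, y b⟫ : ℝ))
        * ‖(Submodule.orthogonalProjectionOnto (Submodule.span ℝ (y '' ↑s))ᗮ (y i)
            : EuclideanSpace ℝ (Fin n))‖ ^ 2 := by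
  rw [← Matrix.det_submatrix_equiv_self (Finset.subtypeInsertEquivOption h).symm
    (Matrix.of fun a b : ↥(insert i s) => (⟪y a, y b⟫ : ℝ))]
  have hmat : (Matrix.of fun a b : ↥(insert i s) => (⟪y a, y b⟫ : ℝ)).submatrix
        (Finset.subtypeInsertEquivOption h).symm (Finset.subtypeInsertEquivOption h).symm
      = Matrix.of fun a b : Option ↥s =>
          (⟪Option.elim a (y i) (fun c : ↥s => y c), Option.elim b (y i) (fun c : ↥s => y c)⟫ : ℝ) := by
    ext a b
    rcases a with _ | a <;> rcases b with _ | b <;> rfl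
  rw [hmat, gram_det_option (fun c : ↥s => y c) (y i),
    show Set.range (fun c : ↥s => y ↑c) = y '' ↑s by ext v; simp]

lemma proj_orth_ne_zero {n m : ℕ} {y : Fin m → EuclideanSpace ℝ (Fin n)}
    (hind : LinearIndependent ℝ y) {s : Finset (Fin m)} {i : Fin m} (hi : i ∉ s) :
    (Submodule.orthogonalProjectionOnto (Submodule.span ℝ (y '' ↑s))ᗮ (y i)
      : EuclideanSpace ℝ (Fin n)) ≠ 0 := by
  have hn : y i ∉ Submodule.span ℝ (y '' ↑s) :=
    hind.notMem_span_image (by simpa using hi)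
  rw [orthogonalProjection_orthogonal_val]
  intro h0
  exact hn (by rw [sub_eq_zero] at h0; rw [h0]; exact SetLike.coe_mem _)

lemma gram_det_pos {n m : ℕ} {y : Fin m → EuclideanSpace ℝ (Fin n)}
    (hind : LinearIndependent ℝ y) (s : Finset (Fin m)) :
    0 < Matrix.det (Matrix.of fun a b : ↥s => (⟪y a, y b⟫ : ℝ)) := by
  induction s using Finset.induction_on with
  | empty =>
      rw [Matrix.det_isEmpty]; norm_num
  | @insert i s hi ih =>
      rw [gram_det_insert y hi]
      exact mul_pos ih (pow_pos (norm_pos_iff.2 (proj_orth_ne_zero hind hi)) 2)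

set_option maxHeartbeats 2000000

/-- Let `1 ≤ k < ℓ ≤ m ≤ n`, let `(y₁,…,y_m)` be a basis of
`U ∩ ℤⁿ` for an `m`-dimensional rational subspace `U` of `ℝⁿ`, and let
`V₁ = span(y₁,…,ŷ_ℓ,…,y_m)`, `V₂ = span(y₁,…,ŷ_k,…,y_m)`.  Then
`dist(V₁,V₂) = H(V₁ ∩ V₂) H(U) / (H(V₁) H(V₂))`. -/
theorem stmt11 (n m : ℕ) (hmn : m ≤ n) (k l : Fin m) (hkl : k < l)
    (y : Fin m → EuclideanSpace ℝ (Fin n))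
    (hint : ∀ i, IsIntVec (y i))
    (hind : LinearIndependent ℝ y)
    (hprim : ∀ z : EuclideanSpace ℝ (Fin n),
      z ∈ Submodule.span ℝ (Set.range y) → IsIntVec z →
        z ∈ Submodule.span ℤ (Set.range y)) :
    distSub (Submodule.span ℝ (y '' {i | i ≠ l})) (Submodule.span ℝ (y '' {i | i ≠ k}))
      = heightOn y ((Finset.univ.erase k).erase l) * heightOn y Finset.univ
        / (heightOn y (Finset.univ.erase l) * heightOn y (Finset.univ.erase k)) := by

  classical
  have hkn : k ≠ l := ne_of_lt hkl
  set S : Finset (Fin m) := (Finset.univ.erase k).erase l with hS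
  have hkS : k ∉ S := by simp [hS]
  have hlS : l ∉ S := by simp [hS]
  set W : Submodule ℝ (EuclideanSpace ℝ (Fin n)) := Submodule.span ℝ (y '' ↑S) with hWdef
  set V₁ := Submodule.span ℝ (y '' {i | i ≠ l}) with hV₁
  set V₂ := Submodule.span ℝ (y '' {i | i ≠ k}) with hV₂
  set v₀ : EuclideanSpace ℝ (Fin n) :=
    (Submodule.orthogonalProjectionOnto Wᗮ (y k) : EuclideanSpace ℝ (Fin n)) with hv₀
  have hv0ne : v₀ ≠ 0 := proj_orth_ne_zero hind hkS
  have hv0W : v₀ ∈ Wᗮ := SetLike.coe_mem _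
  have hv0eq : v₀ = y k - (Submodule.orthogonalProjectionOnto W (y k) : EuclideanSpace ℝ (Fin n)) := by
    rw [hv₀, orthogonalProjection_orthogonal_val]
  have hWV₁ : W ≤ V₁ := Submodule.span_mono (Set.image_mono (by
    intro a ha
    simp only [hS, Finset.coe_erase, Set.mem_diff, Set.mem_singleton_iff] at ha
    exact ha.2))
  have hWV₂ : W ≤ V₂ := Submodule.span_mono (Set.image_mono (by
    intro a ha
    simp only [hS, Finset.coe_erase, Set.mem_diff, Set.mem_singleton_iff] at ha
    exact ha.1.2))
  have hykV₁ : y k ∈ V₁ := Submodule.subset_span ⟨k, hkn, rfl⟩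
  have hv0V₁ : v₀ ∈ V₁ := by
    rw [hv0eq]
    exact Submodule.sub_mem _ hykV₁
      (hWV₁ (SetLike.coe_mem (Submodule.orthogonalProjectionOnto W (y k))))
  set c : ℝ := ‖(Submodule.orthogonalProjectionOnto V₂ᗮ v₀ : EuclideanSpace ℝ (Fin n))‖ / ‖v₀‖ with hc
  have hcnonneg : 0 ≤ c := div_nonneg (norm_nonneg _) (norm_nonneg _)
  have hgreat : IsGreatest {d : ℝ | ∃ v ∈ V₁, v ≠ 0 ∧ d = distToSub v V₂} c := by
    constructor
    · exact ⟨v₀, hv0V₁, hv0ne, rfl⟩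
    · rintro d ⟨v, hvV₁, hvne, rfl⟩
      have hvmem : v ∈ W ⊔ Submodule.span ℝ {v₀} := by
        refine Submodule.span_le.2 ?_ hvV₁
        rintro _ ⟨a, ha, rfl⟩
        by_cases hak : a = k
        · subst hak
          have : y a = (Submodule.orthogonalProjectionOnto W (y a) : EuclideanSpace ℝ (Fin n)) + v₀ := by
            rw [hv0eq]; abel
          rw [this]
          exact Submodule.add_mem _ (Submodule.mem_sup_left (SetLike.coe_mem _))
            (Submodule.mem_sup_right (Submodule.mem_span_singleton_self v₀))
        · refine Submodule.mem_sup_left (Submodule.subset_span ⟨a, ?_, rfl⟩)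
          simp only [hS, Finset.coe_erase, Set.mem_diff, Set.mem_singleton_iff,
            Finset.coe_univ, Set.mem_univ, true_and]
          exact ⟨hak, ha⟩
      obtain ⟨w, hw, z, hz, rfl⟩ := Submodule.mem_sup.1 hvmem
      obtain ⟨t, rfl⟩ := Submodule.mem_span_singleton.1 hz
      have hPw : Submodule.orthogonalProjectionOnto V₂ᗮ w = 0 :=
        Submodule.orthogonalProjectionOnto_apply_of_mem_orthogonal (V₂.le_orthogonal_orthogonal (hWV₂ hw))
      have hproj : (Submodule.orthogonalProjectionOnto V₂ᗮ (w + t • v₀) : EuclideanSpace ℝ (Fin n))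
          = t • (Submodule.orthogonalProjectionOnto V₂ᗮ v₀ : EuclideanSpace ℝ (Fin n)) := by
        rw [map_add, map_smul, hPw]
        simp
      have horth : (⟪w, t • v₀⟫ : ℝ) = 0 := by
        rw [real_inner_smul_right, (Submodule.mem_orthogonal W v₀).1 hv0W w hw, mul_zero]
      have hge : ‖t • v₀‖ ≤ ‖w + t • v₀‖ := by
        have h1 : ‖t • v₀‖ ^ 2 ≤ ‖w + t • v₀‖ ^ 2 := by
          rw [norm_add_sq_real, horth]
          nlinarith [sq_nonneg ‖w‖]
        calc ‖t • v₀‖ = Real.sqrt (‖t • v₀‖ ^ 2) := (Real.sqrt_sq (norm_nonneg _)).symm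
          _ ≤ Real.sqrt (‖w + t • v₀‖ ^ 2) := Real.sqrt_le_sqrt h1
          _ = ‖w + t • v₀‖ := Real.sqrt_sq (norm_nonneg _)
      show distToSub (w + t • v₀) V₂ ≤ c
      unfold distToSub
      rw [hproj]
      rcases eq_or_ne t 0 with rfl | ht
      · simpa using hcnonneg
      · have hpos : 0 < ‖t • v₀‖ := by
          rw [norm_smul]
          exact mul_pos (by simpa using ht) (norm_pos_iff.2 hv0ne)
        calc ‖t • (Submodule.orthogonalProjectionOnto V₂ᗮ v₀ : EuclideanSpace ℝ (Fin n))‖ / ‖w + t • v₀‖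
            ≤ ‖t • (Submodule.orthogonalProjectionOnto V₂ᗮ v₀ : EuclideanSpace ℝ (Fin n))‖ / ‖t • v₀‖ := by
              gcongr
          _ = c := by
              rw [norm_smul, norm_smul, hc, mul_div_mul_left]
              simpa using ht
  have hsup : distSub V₁ V₂ = c := hgreat.csSup_eq
  have himgk : (↑(Finset.univ.erase k) : Set (Fin m)) = {i | i ≠ k} := by ext a; simp
  have himgl : (↑(Finset.univ.erase l) : Set (Fin m)) = {i | i ≠ l} := by ext a; simp
  have h1 : Matrix.det (Matrix.of fun a b : ↥(insert k (Finset.univ.erase k)) =>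
        (⟪y a, y b⟫ : ℝ))
      = Matrix.det (Matrix.of fun a b : ↥(Finset.univ.erase k) => (⟪y a, y b⟫ : ℝ))
        * ‖(Submodule.orthogonalProjectionOnto V₂ᗮ (y k) : EuclideanSpace ℝ (Fin n))‖ ^ 2 := by
    have h := gram_det_insert y (Finset.notMem_erase k Finset.univ)
    rwa [show Submodule.span ℝ (y '' ↑(Finset.univ.erase k)) = V₂ by
      rw [himgk, hV₂]] at h
  rw [Finset.insert_erase (Finset.mem_univ k)] at h1
  have hkel : k ∈ Finset.univ.erase l := Finset.mem_erase.2 ⟨hkn, Finset.mem_univ k⟩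
  have hSS : (Finset.univ.erase l).erase k = S := by rw [hS, Finset.erase_right_comm]
  have h2 : Matrix.det (Matrix.of fun a b : ↥(Finset.univ.erase l) => (⟪y a, y b⟫ : ℝ))
      = Matrix.det (Matrix.of fun a b : ↥S => (⟪y a, y b⟫ : ℝ)) * ‖v₀‖ ^ 2 := by
    have h := gram_det_insert y hkS
    rw [← hWdef, ← hv₀] at h
    rwa [show insert k S = Finset.univ.erase l by
      rw [hS, Finset.erase_right_comm, Finset.insert_erase hkel]] at h
  have hPyk : ‖(Submodule.orthogonalProjectionOnto V₂ᗮ v₀ : EuclideanSpace ℝ (Fin n))‖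
      = ‖(Submodule.orthogonalProjectionOnto V₂ᗮ (y k) : EuclideanSpace ℝ (Fin n))‖ := by
    rw [hv0eq, map_sub]
    have h0 : Submodule.orthogonalProjectionOnto V₂ᗮ
        ((Submodule.orthogonalProjectionOnto W (y k) : EuclideanSpace ℝ (Fin n))) = 0 :=
      Submodule.orthogonalProjectionOnto_apply_of_mem_orthogonal
        (V₂.le_orthogonal_orthogonal (hWV₂ (SetLike.coe_mem _)))
    rw [h0]
    simp
  rw [hsup, hc, hPyk]
  unfold heightOn
  have pGu := gram_det_pos hind Finset.univ
  have pGk := gram_det_pos hind (Finset.univ.erase k)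
  have pGl := gram_det_pos hind (Finset.univ.erase l)
  have pGS := gram_det_pos hind S
  set Gu : ℝ := Matrix.det (Matrix.of fun a b : ↥(Finset.univ : Finset (Fin m)) =>
    (⟪y a, y b⟫ : ℝ)) with hGu
  set Gk : ℝ := Matrix.det (Matrix.of fun a b : ↥(Finset.univ.erase k) =>
    (⟪y a, y b⟫ : ℝ)) with hGk
  set Gl : ℝ := Matrix.det (Matrix.of fun a b : ↥(Finset.univ.erase l) =>
    (⟪y a, y b⟫ : ℝ)) with hGl
  set GS : ℝ := Matrix.det (Matrix.of fun a b : ↥S => (⟪y a, y b⟫ : ℝ)) with hGS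
  have hsGk : Real.sqrt Gk ≠ 0 := ne_of_gt (Real.sqrt_pos.2 pGk)
  have hsGl : Real.sqrt Gl ≠ 0 := ne_of_gt (Real.sqrt_pos.2 pGl)
  have hsGS : Real.sqrt GS ≠ 0 := ne_of_gt (Real.sqrt_pos.2 pGS)
  have hn1 : ‖(Submodule.orthogonalProjectionOnto V₂ᗮ (y k) : EuclideanSpace ℝ (Fin n))‖
      = Real.sqrt Gu / Real.sqrt Gk := by
    rw [h1, Real.sqrt_mul pGk.le, Real.sqrt_sq (norm_nonneg _),
      mul_div_cancel_left₀ _ hsGk]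
  have hn2 : ‖v₀‖ = Real.sqrt Gl / Real.sqrt GS := by
    rw [h2, Real.sqrt_mul pGS.le, Real.sqrt_sq (norm_nonneg _),
      mul_div_cancel_left₀ _ hsGS]
  rw [hn1, hn2]
  field_simp
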